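/- arXiv:1908.07659 — 2 statements merged into one kernel-verified Lean document; each statement's English description precedes it below -/
import Mathlib

section
/- Let d ≥ 1, let Σ be a real symmetric positive-definite d×d matrix, let μ₁, μ₂ ∈ ℝ^d, and let λ > 0. Define the Gaussian densities f(x) = det(2πΣ)^{−1/2}·exp(−½ (x−μ₁)ᵀ Σ⁻¹ (x−μ₁)) and g(x) = det(2πΣ)^{−1/2}·exp(−½ (x−μ₂)ᵀ Σ⁻¹ (x−μ₂)) on ℝ^d. Then ∫_{ℝ^d} [ (1/λ)(g(x)/f(x))^{λ+1} − ((λ+1)/λ)(g(x)/f(x)) + 1 ]·f(x) dx = (1/λ)·exp( (λ(λ+1)/2)·(μ₂−μ₁)ᵀ Σ⁻¹ (μ₂−μ₁) ) − 1/λ. -/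
open Real MeasureTheory Matrix

/-!
Write both densities as `c · exp q(x)` with quadratic exponents. Completing the square shows that
`(g/f)^t · f` is the Gaussian density with mean `μ₁ + t (μ₂ - μ₁)` and the same covariance,
multiplied by the constant `exp (t (t - 1)/2 · (μ₂ - μ₁)ᵀ Σ⁻¹ (μ₂ - μ₁))`. Every Gaussian density
integrates to `1`: writing `Σ⁻¹ = Rᵀ R`, the substitution `y = R x` reduces the integral to a
product of one-dimensional Gaussian integrals. With `t = λ + 1` the three terms of `G_λ(g/f) · f`
therefore integrate to `(1/λ) exp (λ (λ + 1)/2 · (μ₂ - μ₁)ᵀ Σ⁻¹ (μ₂ - μ₁))`, `-(λ + 1)/λ` and `1`.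
-/

section

variable {ι : Type*} [Fintype ι]

lemma exp_neg_half_dotProduct_self (y : ι → ℝ) :
    exp (-(1 / 2) * (y ⬝ᵥ y)) = ∏ i, exp (-(1 / 2) * y i ^ 2) := by
  rw [← exp_sum, dotProduct, Finset.mul_sum]
  simp only [sq]

lemma integrable_exp_neg_half_dotProduct_self :
    Integrable (fun y : ι → ℝ => exp (-(1 / 2) * (y ⬝ᵥ y))) := by
  simp_rw [exp_neg_half_dotProduct_self]
  exact Integrable.fintype_prod fun _ => integrable_exp_neg_mul_sq (by norm_num)

lemma integral_exp_neg_half_dotProduct_self :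
    ∫ y : ι → ℝ, exp (-(1 / 2) * (y ⬝ᵥ y)) = √(2 * π) ^ Fintype.card ι := by
  simp_rw [exp_neg_half_dotProduct_self]
  rw [integral_fintype_prod_volume_eq_pow (fun t => exp (-(1 / 2) * t ^ 2)), integral_gaussian]
  norm_num [div_div_eq_mul_div, mul_comm]

lemma dotProduct_transpose_mul_self_mulVec (R : Matrix ι ι ℝ) (x : ι → ℝ) :
    x ⬝ᵥ ((Rᵀ * R) *ᵥ x) = (R *ᵥ x) ⬝ᵥ (R *ᵥ x) := by
  rw [← mulVec_mulVec, dotProduct_mulVec, vecMul_transpose]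

lemma Matrix.IsSymm.dotProduct_mulVec_sub_smul {A : Matrix ι ι ℝ} (hA : A.IsSymm)
    (u v : ι → ℝ) (t : ℝ) :
    (u - t • v) ⬝ᵥ (A *ᵥ (u - t • v))
      = u ⬝ᵥ (A *ᵥ u) - 2 * t * (u ⬝ᵥ (A *ᵥ v)) + t ^ 2 * (v ⬝ᵥ (A *ᵥ v)) := by
  have hvu : v ⬝ᵥ (A *ᵥ u) = u ⬝ᵥ (A *ᵥ v) := by
    rw [dotProduct_mulVec, ← mulVec_transpose, hA.eq, dotProduct_comm]
  simp only [mulVec_sub, mulVec_smul, dotProduct_sub, sub_dotProduct, dotProduct_smul,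
    smul_dotProduct, smul_eq_mul, hvu]
  ring

variable [DecidableEq ι]

lemma measurableEmbedding_mulVec {M : Matrix ι ι ℝ} (hM : M.det ≠ 0) :
    MeasurableEmbedding (M *ᵥ ·) :=
  ((Matrix.toLin' M).isClosedEmbedding_of_injective <| LinearMap.ker_eq_bot.2 <|
    mulVec_injective_iff_isUnit.2 <| (isUnit_iff_isUnit_det M).2 hM.isUnit).measurableEmbedding

lemma map_mulVec_volume {M : Matrix ι ι ℝ} (hM : M.det ≠ 0) :
    Measure.map (M *ᵥ ·) volume = ENNReal.ofReal |M.det|⁻¹ • volume := by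
  have := Real.map_matrix_volume_pi_eq_smul_volume_pi hM
  rwa [abs_inv] at this

lemma integral_comp_mulVec {E : Type*} [NormedAddCommGroup E] [NormedSpace ℝ E]
    {M : Matrix ι ι ℝ} (hM : M.det ≠ 0) (φ : (ι → ℝ) → E) :
    ∫ x, φ (M *ᵥ x) = |M.det|⁻¹ • ∫ y, φ y := by
  rw [← (measurableEmbedding_mulVec hM).integral_map, map_mulVec_volume hM,
    integral_smul_measure, ENNReal.toReal_ofReal (by positivity)]

lemma integrable_comp_mulVec_iff {E : Type*} [NormedAddCommGroup E]
    {M : Matrix ι ι ℝ} (hM : M.det ≠ 0) {φ : (ι → ℝ) → E} :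
    Integrable (fun x => φ (M *ᵥ x)) ↔ Integrable φ := by
  rw [← Function.comp_def, ← (measurableEmbedding_mulVec hM).integrable_map_iff,
    map_mulVec_volume hM, integrable_smul_measure (by simpa using hM) ENNReal.ofReal_ne_top]

open scoped MatrixOrder in
lemma Matrix.PosDef.exists_eq_transpose_mul_self {A : Matrix ι ι ℝ} (hA : A.PosDef) :
    ∃ R : Matrix ι ι ℝ, R.det ≠ 0 ∧ A = Rᵀ * R := by
  have hsq : A = (CFC.sqrt A)ᵀ * CFC.sqrt A := by
    rw [← conjTranspose_eq_transpose_of_trivial, ← star_eq_conjTranspose,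
      (CFC.sqrt_nonneg A).isSelfAdjoint.star_eq, CFC.sqrt_mul_sqrt_self A hA.posSemidef.nonneg]
  refine ⟨CFC.sqrt A, fun h => hA.det_pos.ne' ?_, hsq⟩
  rw [hsq, det_mul, h, mul_zero]

lemma integrable_exp_neg_half_dotProduct_mulVec {A : Matrix ι ι ℝ} (hA : A.PosDef) :
    Integrable (fun x : ι → ℝ => exp (-(1 / 2) * (x ⬝ᵥ (A *ᵥ x)))) := by
  obtain ⟨R, hR, rfl⟩ := hA.exists_eq_transpose_mul_self
  simp_rw [dotProduct_transpose_mul_self_mulVec]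
  exact (integrable_comp_mulVec_iff hR (φ := fun y => exp (-(1 / 2) * (y ⬝ᵥ y)))).2
    integrable_exp_neg_half_dotProduct_self

lemma integral_exp_neg_half_dotProduct_mulVec {A : Matrix ι ι ℝ} (hA : A.PosDef) :
    ∫ x : ι → ℝ, exp (-(1 / 2) * (x ⬝ᵥ (A *ᵥ x))) = √(2 * π) ^ Fintype.card ι / √A.det := by
  obtain ⟨R, hR, rfl⟩ := hA.exists_eq_transpose_mul_self
  simp_rw [dotProduct_transpose_mul_self_mulVec]
  rw [integral_comp_mulVec hR (fun y => exp (-(1 / 2) * (y ⬝ᵥ y))),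
    integral_exp_neg_half_dotProduct_self, det_mul, det_transpose, sqrt_mul_self_eq_abs,
    smul_eq_mul, inv_mul_eq_div]

noncomputable def multivariateGaussianPDF (μ : ι → ℝ) (S : Matrix ι ι ℝ) (x : ι → ℝ) : ℝ :=
  (√((2 * π) • S).det)⁻¹ * exp (-(1 / 2) * ((x - μ) ⬝ᵥ (S⁻¹ *ᵥ (x - μ))))

variable {S : Matrix ι ι ℝ}

lemma multivariateGaussianPDF_pos (hS : S.PosDef) (μ x : ι → ℝ) :
    0 < multivariateGaussianPDF μ S x := by
  have : 0 < ((2 * π) • S).det := by rw [det_smul]; exact mul_pos (by positivity) hS.det_pos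
  unfold multivariateGaussianPDF
  positivity

lemma integrable_multivariateGaussianPDF (hS : S.PosDef) (μ : ι → ℝ) :
    Integrable (multivariateGaussianPDF μ S) :=
  ((integrable_exp_neg_half_dotProduct_mulVec hS.inv).comp_sub_right μ).const_mul _

lemma integral_multivariateGaussianPDF (hS : S.PosDef) (μ : ι → ℝ) :
    ∫ x, multivariateGaussianPDF μ S x = 1 := by
  have hpow : √((2 * π) ^ Fintype.card ι) = √(2 * π) ^ Fintype.card ι := by
    rw [sqrt_eq_iff_eq_sq (by positivity) (by positivity), pow_right_comm, sq_sqrt (by positivity)]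
  have : 0 < √S.det := sqrt_pos.2 hS.det_pos
  unfold multivariateGaussianPDF
  rw [integral_const_mul,
    integral_sub_right_eq_self (fun y => exp (-(1 / 2) * (y ⬝ᵥ (S⁻¹ *ᵥ y)))) μ,
    integral_exp_neg_half_dotProduct_mulVec hS.inv, det_smul, det_nonsing_inv,
    Ring.inverse_eq_inv', sqrt_inv, div_inv_eq_mul, sqrt_mul (by positivity), hpow,
    inv_mul_cancel₀ (by positivity)]

lemma rpow_div_mul_multivariateGaussianPDF (hS : S.PosDef) (μ₁ μ₂ : ι → ℝ) (t : ℝ)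
    (x : ι → ℝ) :
    (multivariateGaussianPDF μ₂ S x / multivariateGaussianPDF μ₁ S x) ^ t
        * multivariateGaussianPDF μ₁ S x
      = exp (t * (t - 1) / 2 * ((μ₂ - μ₁) ⬝ᵥ (S⁻¹ *ᵥ (μ₂ - μ₁))))
        * multivariateGaussianPDF (μ₁ + t • (μ₂ - μ₁)) S x := by
  have hc : (√((2 * π) • S).det)⁻¹ ≠ 0 :=
    (pos_of_mul_pos_left (multivariateGaussianPDF_pos hS μ₁ x) (exp_pos _).le).ne'
  have hsymm : S⁻¹.IsSymm := isHermitian_iff_isSymm.1 hS.inv.isHermitian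
  have h₂ : x - μ₂ = (x - μ₁) - (1 : ℝ) • (μ₂ - μ₁) := by rw [one_smul]; abel
  have hm : x - (μ₁ + t • (μ₂ - μ₁)) = (x - μ₁) - t • (μ₂ - μ₁) := by abel
  unfold multivariateGaussianPDF
  rw [mul_div_mul_left _ _ hc, ← exp_sub, ← exp_mul, h₂, hm,
    hsymm.dotProduct_mulVec_sub_smul, hsymm.dotProduct_mulVec_sub_smul, mul_left_comm, ← exp_add,
    mul_left_comm, ← exp_add]
  congr 2
  ring

lemma integrable_rpow_div_mul_multivariateGaussianPDF (hS : S.PosDef) (μ₁ μ₂ : ι → ℝ)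
    (t : ℝ) :
    Integrable fun x => (multivariateGaussianPDF μ₂ S x / multivariateGaussianPDF μ₁ S x) ^ t
      * multivariateGaussianPDF μ₁ S x := by
  simp_rw [rpow_div_mul_multivariateGaussianPDF hS]
  exact (integrable_multivariateGaussianPDF hS _).const_mul _

lemma integral_rpow_div_mul_multivariateGaussianPDF (hS : S.PosDef) (μ₁ μ₂ : ι → ℝ) (t : ℝ) :
    ∫ x, (multivariateGaussianPDF μ₂ S x / multivariateGaussianPDF μ₁ S x) ^ t
        * multivariateGaussianPDF μ₁ S x
      = exp (t * (t - 1) / 2 * ((μ₂ - μ₁) ⬝ᵥ (S⁻¹ *ᵥ (μ₂ - μ₁)))) := by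
  simp_rw [rpow_div_mul_multivariateGaussianPDF hS, integral_const_mul,
    integral_multivariateGaussianPDF hS, mul_one]

end

theorem stmt_5_general (d : ℕ) (S : Matrix (Fin d) (Fin d) ℝ) (hS : S.PosDef)
    (μ₁ μ₂ : Fin d → ℝ) (lam : ℝ) (hlam : 0 < lam)
    (f g : (Fin d → ℝ) → ℝ)
    (hf : f = fun x => (Real.sqrt (((2 * π) • S).det))⁻¹ *
        Real.exp (-(1 / 2) * ((x - μ₁) ⬝ᵥ (S⁻¹ *ᵥ (x - μ₁)))))
    (hg : g = fun x => (Real.sqrt (((2 * π) • S).det))⁻¹ *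
        Real.exp (-(1 / 2) * ((x - μ₂) ⬝ᵥ (S⁻¹ *ᵥ (x - μ₂))))) :
    ∫ x : Fin d → ℝ,
        ((1 / lam) * (g x / f x) ^ (lam + 1) - ((lam + 1) / lam) * (g x / f x) + 1) * f x
      = (1 / lam) *
          Real.exp ((lam * (lam + 1) / 2) * ((μ₂ - μ₁) ⬝ᵥ (S⁻¹ *ᵥ (μ₂ - μ₁)))) - 1 / lam := by
  replace hf : f = multivariateGaussianPDF μ₁ S := hf
  replace hg : g = multivariateGaussianPDF μ₂ S := hg
  have hsplit : ∀ x,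
      ((1 / lam) * (g x / f x) ^ (lam + 1) - ((lam + 1) / lam) * (g x / f x) + 1) * f x
        = 1 / lam * ((g x / f x) ^ (lam + 1) * f x) - (lam + 1) / lam * g x + f x := by
    intro x
    have : f x ≠ 0 := hf ▸ (multivariateGaussianPDF_pos hS μ₁ x).ne'
    field_simp
  have hf_int : Integrable f := hf ▸ integrable_multivariateGaussianPDF hS μ₁
  have hg_int : Integrable g := hg ▸ integrable_multivariateGaussianPDF hS μ₂
  have htilt_int := hf ▸ hg ▸ integrable_rpow_div_mul_multivariateGaussianPDF hS μ₁ μ₂ (lam + 1)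
  rw [integral_congr_ae (ae_of_all _ hsplit), integral_add ?_ hf_int,
    integral_sub (htilt_int.const_mul _) (hg_int.const_mul _), integral_const_mul,
    integral_const_mul, hf, hg, integral_rpow_div_mul_multivariateGaussianPDF hS,
    integral_multivariateGaussianPDF hS, integral_multivariateGaussianPDF hS]
  · rw [add_sub_cancel_right, mul_comm (lam + 1) lam]
    field_simp [hlam.ne']
    ring
  · exact (htilt_int.const_mul _).sub (hg_int.const_mul _)

/-- For Gaussian densities `f, g` on `ℝ^d` with common positive-definite covariance `Σ`
and means `μ₁, μ₂`, the λ-Bregman divergence `∫ G_λ(g/f)·f` equals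
`(1/λ)·exp((λ(λ+1)/2)·(μ₂−μ₁)ᵀ Σ⁻¹ (μ₂−μ₁)) − 1/λ`. -/
theorem stmt_5 (d : ℕ) (hd : 1 ≤ d) (S : Matrix (Fin d) (Fin d) ℝ) (hS : S.PosDef)
    (μ₁ μ₂ : Fin d → ℝ) (lam : ℝ) (hlam : 0 < lam)
    (f g : (Fin d → ℝ) → ℝ)
    (hf : f = fun x => (Real.sqrt (((2 * π) • S).det))⁻¹ *
        Real.exp (-(1 / 2) * ((x - μ₁) ⬝ᵥ (S⁻¹ *ᵥ (x - μ₁)))))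
    (hg : g = fun x => (Real.sqrt (((2 * π) • S).det))⁻¹ *
        Real.exp (-(1 / 2) * ((x - μ₂) ⬝ᵥ (S⁻¹ *ᵥ (x - μ₂))))) :
    ∫ x : Fin d → ℝ,
        ((1 / lam) * (g x / f x) ^ (lam + 1) - ((lam + 1) / lam) * (g x / f x) + 1) * f x
      = (1 / lam) *
          Real.exp ((lam * (lam + 1) / 2) * ((μ₂ - μ₁) ⬝ᵥ (S⁻¹ *ᵥ (μ₂ - μ₁)))) - 1 / lam :=
  stmt_5_general d S hS μ₁ μ₂ lam hlam f g hf hg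
end

section
/- Let (Ω, ℱ, P) be a probability space, α > 0, β ∈ ℝ, and let H : Ω → ℝ be measurable. Define 𝓔*(ω) = exp((−β − H(ω))/α), and assume 𝓔*·H, 𝓔*·log 𝓔* and 𝓔* are P-integrable. Then for every measurable 𝓔 : Ω → [0, ∞) such that 𝓔·H, 𝓔·log 𝓔 and 𝓔 are P-integrable (with the convention 0·log 0 = 0), one has ∫ (𝓔*·H + α·(𝓔* log 𝓔* − 𝓔* + 1) + β·𝓔*) dP ≤ ∫ (𝓔·H + α·(𝓔 log 𝓔 − 𝓔 + 1) + β·𝓔) dP. -/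
open Real MeasureTheory

/-! The pointwise Fenchel–Young inequality `e y ≤ (e log e − e) + exp y` for the conjugate pair
`t log t − t` and `exp` shows that the integrand of the Lagrangian, for fixed `H(ω)`, is minimized
at `e = exp((−β − H(ω))/α)`, the point where `α log e = −β − H(ω)`. Integrating the pointwise
inequality gives the claim. -/

theorem Real.mul_le_mul_log_sub_self_add_exp {x : ℝ} (hx : 0 ≤ x) (y : ℝ) :
    x * y ≤ x * log x - x + exp y := by
  rcases hx.eq_or_lt with rfl | hx
  · simpa using (exp_pos y).le
  have h := add_one_le_exp (y - log x)
  rw [exp_sub, exp_log hx, le_div_iff₀ hx] at h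
  linarith

noncomputable def klLagrangian (α β h e : ℝ) : ℝ := e * h + α * (e * log e - e + 1) + β * e

theorem klLagrangian_exp_le {α : ℝ} (hα : 0 < α) (β h : ℝ) {e : ℝ} (he : 0 ≤ e) :
    klLagrangian α β h (exp ((-β - h) / α)) ≤ klLagrangian α β h e := by
  set y := (-β - h) / α
  have hy : α * y = -β - h := mul_div_cancel₀ _ hα.ne'
  have key := mul_le_mul_of_nonneg_left (mul_le_mul_log_sub_self_add_exp he y) hα.le
  unfold klLagrangian
  rw [log_exp]
  linear_combination key + (exp y - e) * hy

theorem MeasureTheory.Integrable.klLagrangian {Ω : Type*} [MeasurableSpace Ω] {P : Measure Ω}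
    [IsFiniteMeasure P] (α β : ℝ) {H E : Ω → ℝ} (hEH : Integrable (fun ω => E ω * H ω) P)
    (hElogE : Integrable (fun ω => E ω * log (E ω)) P) (hE : Integrable E P) :
    Integrable (fun ω => klLagrangian α β (H ω) (E ω)) P :=
  (hEH.add (((hElogE.sub hE).add (integrable_const 1)).const_mul α)).add (hE.const_mul β)

theorem stmt_8_general {Ω : Type*} [MeasurableSpace Ω] (P : Measure Ω) [IsProbabilityMeasure P]
    (α β : ℝ) (hα : 0 < α)
    (H : Ω → ℝ)
    (Estar : Ω → ℝ) (hEstar : Estar = fun ω => Real.exp ((-β - H ω) / α))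
    (hint1 : Integrable (fun ω => Estar ω * H ω) P)
    (hint2 : Integrable (fun ω => Estar ω * Real.log (Estar ω)) P)
    (hint3 : Integrable Estar P) :
    ∀ E : Ω → ℝ, Measurable E → (∀ ω, 0 ≤ E ω) →
      Integrable (fun ω => E ω * H ω) P →
      Integrable (fun ω => E ω * Real.log (E ω)) P →
      Integrable E P →
      ∫ ω, (Estar ω * H ω + α * (Estar ω * Real.log (Estar ω) - Estar ω + 1)
          + β * Estar ω) ∂P ≤
        ∫ ω, (E ω * H ω + α * (E ω * Real.log (E ω) - E ω + 1) + β * E ω) ∂P := by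
  intro E _ hE0 hEH hElogE hE
  refine integral_mono (hint1.klLagrangian α β hint2 hint3) (hEH.klLagrangian α β hElogE hE)
    fun ω => ?_
  subst hEstar
  exact klLagrangian_exp_le hα β (H ω) (hE0 ω)

/-- Kullback–Leibler case: `𝓔* = exp((−β − H)/α)` minimizes the inner Lagrangian
`∫ 𝓔·H + α·(𝓔 log 𝓔 − 𝓔 + 1) + β·𝓔 dP` over nonnegative measurable `𝓔`
(with the convention `0·log 0 = 0`, which holds for `Real.log`). -/
theorem stmt_8 {Ω : Type*} [MeasurableSpace Ω] (P : Measure Ω) [IsProbabilityMeasure P]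
    (α β : ℝ) (hα : 0 < α)
    (H : Ω → ℝ) (hH : Measurable H)
    (Estar : Ω → ℝ) (hEstar : Estar = fun ω => Real.exp ((-β - H ω) / α))
    (hint1 : Integrable (fun ω => Estar ω * H ω) P)
    (hint2 : Integrable (fun ω => Estar ω * Real.log (Estar ω)) P)
    (hint3 : Integrable Estar P) :
    ∀ E : Ω → ℝ, Measurable E → (∀ ω, 0 ≤ E ω) →
      Integrable (fun ω => E ω * H ω) P →
      Integrable (fun ω => E ω * Real.log (E ω)) P →
      Integrable E P →
      ∫ ω, (Estar ω * H ω + α * (Estar ω * Real.log (Estar ω) - Estar ω + 1)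
          + β * Estar ω) ∂P ≤
        ∫ ω, (E ω * H ω + α * (E ω * Real.log (E ω) - E ω + 1) + β * E ω) ∂P :=
  stmt_8_general P α β hα H Estar hEstar hint1 hint2 hint3
end
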